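/- Let G be a finite group generated by a subset closed under conjugation Γ. The assignment e_a ↦ â (tautological lift) on generators extends to an injective group homomorphism Adj Γ → F/R_Γ that admits a left inverse, where F is the free group on the set G and R_Γ is the normal subgroup generated by [F,R] and the elements â b̂ ĉ⁻¹ b̂⁻¹ for a ∈ Γ, b ∈ G, c = b⁻¹ab, with R = ker(F → G). -/

import Mathlib

/-! Conjugation in `Adj Γ` acts on the generators through the projection `Adj Γ → G`,
`e_a ↦ a`, so the kernel of this projection is central. As `Γ` generates `G`, the projection is
onto, and a set-theoretic section `G → Adj Γ` that is `a ↦ e_a` on `Γ` lifts to `F → Adj Γ`.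
This lift sends `R` into the centre, so it kills `[F, R]`, and it kills the lifted conjugation
relations; the induced map `F/R_Γ → Adj Γ` is a left inverse of `e_a ↦ â`. -/

variable (G : Type*) [Group G]

/-- The canonical surjection from the free group `F` on the set `G` to `G`. -/
def tautProj : FreeGroup G →* G := FreeGroup.lift id

/-- `R = ker (F → G)`. -/
def Rrel : Subgroup (FreeGroup G) := (tautProj G).ker

/-- The commutator subgroup `[F, R]`. -/
def FRcomm : Subgroup (FreeGroup G) := ⁅(⊤ : Subgroup (FreeGroup G)), Rrel G⁆

/-- The tautological lifts `â b̂ ĉ⁻¹ b̂⁻¹` of the conjugation relations, `a ∈ Γ`,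
`c = b⁻¹ a b`. -/
def conjRels (Γ : Set G) : Set (FreeGroup G) :=
  {x | ∃ a ∈ Γ, ∃ b : G, x = FreeGroup.of a * FreeGroup.of b *
    (FreeGroup.of (b⁻¹ * a * b))⁻¹ * (FreeGroup.of b)⁻¹}

/-- `R_Γ`: the normal subgroup generated by `[F,R]` and the lifted conjugation relations. -/
def RGamma (Γ : Set G) : Subgroup (FreeGroup G) :=
  Subgroup.normalClosure ((FRcomm G : Set (FreeGroup G)) ∪ conjRels G Γ)

instance (Γ : Set G) : (RGamma G Γ).Normal := Subgroup.normalClosure_normal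

/-- The relations `e_a e_b = e_b e_{b⁻¹ a b}` for the adjoint group `Adj Γ` of the
conjugation quandle `Γ`. -/
def adjRels (Γ : Set G) (hΓ : ∀ a ∈ Γ, ∀ b : G, b⁻¹ * a * b ∈ Γ) : Set (FreeGroup Γ) :=
  {x | ∃ a b : Γ, x = FreeGroup.of a * FreeGroup.of b *
    (FreeGroup.of (⟨(↑b)⁻¹ * ↑a * ↑b, hΓ a a.2 b⟩ : Γ))⁻¹ * (FreeGroup.of b)⁻¹}

section AdjointGroup

variable {G} {Γ : Set G} (hΓ : ∀ a ∈ Γ, ∀ b : G, b⁻¹ * a * b ∈ Γ)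

local notation "Adj" => PresentedGroup (adjRels G Γ hΓ)

def adjProj : Adj →* G :=
  PresentedGroup.toGroup (f := fun a : Γ => (a : G)) (by
    rintro r ⟨a, b, rfl⟩
    simp only [map_mul, map_inv, FreeGroup.lift_apply_of]
    group)

@[simp]
lemma adjProj_of (a : Γ) : adjProj hΓ (PresentedGroup.of a) = a :=
  PresentedGroup.toGroup.of _

lemma of_conj_of (a b : Γ) :
    (PresentedGroup.of b)⁻¹ * PresentedGroup.of a * PresentedGroup.of b =
      (PresentedGroup.of ⟨(↑b)⁻¹ * ↑a * ↑b, hΓ a a.2 b⟩ : Adj) := by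
  have hrel : (PresentedGroup.mk (adjRels G Γ hΓ))
      (FreeGroup.of a * FreeGroup.of b *
        (FreeGroup.of ⟨(↑b)⁻¹ * ↑a * ↑b, hΓ a a.2 b⟩)⁻¹ * (FreeGroup.of b)⁻¹) = 1 :=
    (QuotientGroup.eq_one_iff _).mpr (Subgroup.subset_normalClosure ⟨a, b, rfl⟩)
  simp only [map_mul, map_inv, mul_inv_eq_iff_eq_mul] at hrel
  rw [mul_assoc]
  exact (congrArg _ hrel).trans (inv_mul_cancel_left _ _)

lemma conj_of (x : Adj) (a : Γ) :
    x⁻¹ * PresentedGroup.of a * x =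
      PresentedGroup.of ⟨(adjProj hΓ x)⁻¹ * a * adjProj hΓ x, hΓ a a.2 _⟩ := by
  have hx : x ∈ Subgroup.closure (Set.range PresentedGroup.of) := by simp
  induction hx using Subgroup.closure_induction generalizing a with
  | mem _ hb =>
    obtain ⟨b, rfl⟩ := hb
    rw [of_conj_of, adjProj_of]
  | one => simp
  | mul x y _ _ hx hy =>
    calc (x * y)⁻¹ * PresentedGroup.of a * (x * y)
        = y⁻¹ * (x⁻¹ * PresentedGroup.of a * x) * y := by group
      _ = _ := by
        rw [hx, hy]
        exact congrArg _ (Subtype.ext (by simp only [map_mul]; group))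
  | inv x _ hx =>
    have hmem : adjProj hΓ x * a * (adjProj hΓ x)⁻¹ ∈ Γ := by
      simpa using hΓ a a.2 (adjProj hΓ x)⁻¹
    have hconj := hx ⟨_, hmem⟩
    rw [show (⟨(adjProj hΓ x)⁻¹ * (adjProj hΓ x * a * (adjProj hΓ x)⁻¹) * adjProj hΓ x, _⟩ : Γ)
      = a from Subtype.ext (by group)] at hconj
    have hinv : x * PresentedGroup.of a * x⁻¹ = PresentedGroup.of ⟨_, hmem⟩ := by
      rw [← hconj]; group
    rw [inv_inv, hinv]
    exact congrArg _ (Subtype.ext (by simp))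

lemma commute_of_adjProj_eq_one {x : Adj} (hx : adjProj hΓ x = 1) (y : Adj) :
    Commute x y := by
  suffices Subgroup.closure (Set.range PresentedGroup.of) ≤ Subgroup.centralizer {x} by
    exact (Subgroup.mem_centralizer_singleton_iff.mp (this (by simp))).symm
  rw [Subgroup.closure_le]
  rintro _ ⟨a, rfl⟩
  have hconj := conj_of hΓ x a
  rw [show (⟨(adjProj hΓ x)⁻¹ * a * adjProj hΓ x, _⟩ : Γ) = a from Subtype.ext (by simp [hx]),
    mul_assoc, inv_mul_eq_iff_eq_mul] at hconj
  exact Subgroup.mem_centralizer_singleton_iff.mpr hconj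

lemma adjProj_surjective (hgen : Subgroup.closure Γ = ⊤) : Function.Surjective (adjProj hΓ) := by
  rw [← MonoidHom.range_eq_top, eq_top_iff, ← hgen, Subgroup.closure_le]
  exact fun a ha => ⟨PresentedGroup.of ⟨a, ha⟩, adjProj_of hΓ _⟩

open Classical in
noncomputable def adjSection (hgen : Subgroup.closure Γ = ⊤) (g : G) : Adj :=
  if h : g ∈ Γ then PresentedGroup.of ⟨g, h⟩ else (adjProj_surjective hΓ hgen g).choose

lemma adjProj_adjSection (hgen : Subgroup.closure Γ = ⊤) (g : G) :
    adjProj hΓ (adjSection hΓ hgen g) = g := by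
  unfold adjSection
  split_ifs
  · exact adjProj_of hΓ _
  · exact (adjProj_surjective hΓ hgen g).choose_spec

lemma adjSection_of_mem (hgen : Subgroup.closure Γ = ⊤) {a : G} (ha : a ∈ Γ) :
    adjSection hΓ hgen a = PresentedGroup.of ⟨a, ha⟩ :=
  dif_pos ha

noncomputable def freeToAdj (hgen : Subgroup.closure Γ = ⊤) : FreeGroup G →* Adj :=
  FreeGroup.lift (adjSection hΓ hgen)

lemma adjProj_comp_freeToAdj (hgen : Subgroup.closure Γ = ⊤) :
    (adjProj hΓ).comp (freeToAdj hΓ hgen) = tautProj G :=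
  FreeGroup.ext_hom _ _ fun g => by
    simp [freeToAdj, tautProj, adjProj_adjSection]

lemma FRcomm_le_ker_freeToAdj (hgen : Subgroup.closure Γ = ⊤) :
    FRcomm G ≤ (freeToAdj hΓ hgen).ker := by
  rw [FRcomm, Subgroup.commutator_le]
  intro p _ r hr
  have hr' : adjProj hΓ (freeToAdj hΓ hgen r) = 1 := by
    rw [← MonoidHom.comp_apply, adjProj_comp_freeToAdj]
    exact hr
  rw [MonoidHom.mem_ker, map_commutatorElement, commutatorElement_eq_one_iff_commute]
  exact (commute_of_adjProj_eq_one hΓ hr' _).symm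

lemma conjRels_subset_ker_freeToAdj (hgen : Subgroup.closure Γ = ⊤) :
    conjRels G Γ ⊆ (freeToAdj hΓ hgen).ker := by
  rintro _ ⟨a, ha, b, rfl⟩
  have hconj := conj_of hΓ (adjSection hΓ hgen b) ⟨a, ha⟩
  simp only [adjProj_adjSection] at hconj
  rw [SetLike.mem_coe, MonoidHom.mem_ker]
  simp only [freeToAdj, map_mul, map_inv, FreeGroup.lift_apply_of,
    adjSection_of_mem hΓ hgen ha, adjSection_of_mem hΓ hgen (hΓ a ha b), ← hconj]
  group

lemma RGamma_le_ker_freeToAdj (hgen : Subgroup.closure Γ = ⊤) :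
    RGamma G Γ ≤ (freeToAdj hΓ hgen).ker :=
  Subgroup.normalClosure_le_normal <| Set.union_subset (FRcomm_le_ker_freeToAdj hΓ hgen)
    (conjRels_subset_ker_freeToAdj hΓ hgen)

noncomputable def quotToAdj (hgen : Subgroup.closure Γ = ⊤) : FreeGroup G ⧸ RGamma G Γ →* Adj :=
  QuotientGroup.lift _ (freeToAdj hΓ hgen) (RGamma_le_ker_freeToAdj hΓ hgen)

def adjToQuot : Adj →* FreeGroup G ⧸ RGamma G Γ :=
  PresentedGroup.toGroup (f := fun a : Γ => (FreeGroup.of (a : G) : FreeGroup G ⧸ RGamma G Γ)) (by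
    rintro _ ⟨a, b, rfl⟩
    have hrel : (FreeGroup.of (a : G) * FreeGroup.of (b : G) *
        (FreeGroup.of ((b : G)⁻¹ * a * b))⁻¹ * (FreeGroup.of (b : G))⁻¹ :
          FreeGroup G ⧸ RGamma G Γ) = 1 :=
      (QuotientGroup.eq_one_iff _).mpr (Subgroup.subset_normalClosure (.inr ⟨a, a.2, b, rfl⟩))
    simpa only [map_mul, map_inv, FreeGroup.lift_apply_of, QuotientGroup.mk_mul,
      QuotientGroup.mk_inv] using hrel)

lemma adjToQuot_of (a : Γ) :
    adjToQuot hΓ (PresentedGroup.of a) = (FreeGroup.of (a : G) : FreeGroup G ⧸ RGamma G Γ) :=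
  PresentedGroup.toGroup.of _

lemma quotToAdj_comp_adjToQuot (hgen : Subgroup.closure Γ = ⊤) :
    (quotToAdj hΓ hgen).comp (adjToQuot hΓ) = MonoidHom.id Adj :=
  PresentedGroup.ext fun a => by
    simp [quotToAdj, adjToQuot_of, freeToAdj, adjSection_of_mem hΓ hgen a.2]

end AdjointGroup

theorem adj_to_GGamma_injective (Γ : Set G)
    (hΓ : ∀ a ∈ Γ, ∀ b : G, b⁻¹ * a * b ∈ Γ)
    (hgen : Subgroup.closure Γ = ⊤) :
    ∃ φ : PresentedGroup (adjRels G Γ hΓ) →* FreeGroup G ⧸ RGamma G Γ,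
      (∀ a : Γ, φ (PresentedGroup.of a) = QuotientGroup.mk (FreeGroup.of (a : G))) ∧
      Function.Injective φ ∧
      ∃ ψ : (FreeGroup G ⧸ RGamma G Γ) →* PresentedGroup (adjRels G Γ hΓ),
        ∀ x, ψ (φ x) = x := by
  have hleft : Function.LeftInverse (quotToAdj hΓ hgen) (adjToQuot hΓ) :=
    DFunLike.congr_fun (quotToAdj_comp_adjToQuot hΓ hgen)
  exact ⟨adjToQuot hΓ, adjToQuot_of hΓ, hleft.injective, quotToAdj hΓ hgen, hleft⟩
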